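/- arXiv:2505.13927 — 2 statements merged into one kernel-verified Lean document; each statement's English description precedes it below -/
import Mathlib

section
/- Let Z and W be symmetric positive semidefinite n×n real matrices with Z ⪰ W, Z·1 = 0, and null(W) = span(1). Then the diagonal matrix D = diag(Z) is positive definite. -/
/-!
Since `Z - W ⪰ 0`, `Z i i ≥ W i i`. If `W i i = 0`, then `eᵢᵀ W eᵢ = 0`, so `W eᵢ = 0` because
`W ⪰ 0`; but `eᵢ` is not constant when `n ≥ 2`, contradicting `null W = span 1`.
-/

open Matrix
open scoped ComplexOrder

namespace Matrix.PosSemidef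

variable {n 𝕜 : Type*} [Fintype n] [DecidableEq n] [RCLike 𝕜] {A : Matrix n n 𝕜}

theorem mulVec_single_one_eq_zero (hA : A.PosSemidef) {i : n} (hi : A i i = 0) :
    A *ᵥ Pi.single i 1 = 0 :=
  (hA.dotProduct_mulVec_zero_iff _).mp <| by simp [hi]

theorem diag_pos_of_ker_le_const [Nontrivial n] (hA : A.PosSemidef)
    (hker : ∀ x : n → 𝕜, A *ᵥ x = 0 → ∃ c : 𝕜, x = fun _ => c) (i : n) : 0 < A i i := by
  refine hA.diag_nonneg.lt_of_ne' fun hi => ?_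
  obtain ⟨c, hc⟩ := hker _ (hA.mulVec_single_one_eq_zero hi)
  obtain ⟨j, hj⟩ := exists_ne i
  have hci : 1 = c := by simpa using congrFun hc i
  have hcj : 0 = c := by simpa [Pi.single_eq_of_ne hj] using congrFun hc j
  exact one_ne_zero (hci.trans hcj.symm)

end Matrix.PosSemidef

theorem Matrix.diag_le_diag_of_posSemidef_sub {n 𝕜 : Type*} [Fintype n] [RCLike 𝕜]
    {A B : Matrix n n 𝕜} (h : (A - B).PosSemidef) (i : n) : B i i ≤ A i i :=
  sub_nonneg.mp h.diag_nonneg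

theorem stmt_0_general (n : ℕ) (hn : 2 ≤ n) (Z W : Matrix (Fin n) (Fin n) ℝ)
    (hW : W.PosSemidef) (hZW : (Z - W).PosSemidef)
    (hWnull : ∀ x : Fin n → ℝ, W *ᵥ x = 0 ↔ ∃ c : ℝ, x = fun _ => c) :
    (Matrix.diagonal (fun i => Z i i)).PosDef := by
  have : Nontrivial (Fin n) := Fin.nontrivial_iff_two_le.mpr hn
  refine posDef_diagonal_iff.mpr fun i => ?_
  calc 0 < W i i := hW.diag_pos_of_ker_le_const (fun x => (hWnull x).mp) i
    _ ≤ Z i i := diag_le_diag_of_posSemidef_sub hZW i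

theorem stmt_0 (n : ℕ) (hn : 2 ≤ n) (Z W : Matrix (Fin n) (Fin n) ℝ)
    (hZ : Z.PosSemidef) (hW : W.PosSemidef) (hZW : (Z - W).PosSemidef)
    (hZ1 : Z *ᵥ (fun _ => (1 : ℝ)) = 0)
    (hWnull : ∀ x : Fin n → ℝ, W *ᵥ x = 0 ↔ ∃ c : ℝ, x = fun _ => c) :
    (Matrix.diagonal (fun i => Z i i)).PosDef :=
  stmt_0_general n hn Z W hW hZW hWnull
end

section
/- Let H₁, H₂ be real Hilbert spaces, B : H₂ → H₂ a β-cocoercive operator with β > 0, K : H₁ → H₂ and Q : H₂ → H₁ bounded linear operators, and U = (Q* − K)* (1/β)(Q* − K) : H₁ → H₁. Then the operator x ↦ Q B K x + (1/4) U x is monotone on H₁. -/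
/-!
Write `M = Q* - K`, `d = x - y` and `a = B (K x) - B (K y)`. Moving `Q` across the inner product,
`⟪d, Q a⟫ = ⟪K d, a⟫ + ⟪M d, a⟫ ≥ β ‖a‖² + ⟪M d, a⟫` by cocoercivity, while the `U`-term
contributes exactly `‖M d‖² / (4β)`. The sum `β ‖a‖² + ⟪M d, a⟫ + ‖M d‖² / (4β)` is nonnegative
by Cauchy–Schwarz, since `β t² - s t + s² / (4β) = (2β t - s)² / (4β)`.
-/

open ContinuousLinearMap

open scoped InnerProductSpace

lemma inner_add_norm_sq_div_nonneg {E : Type*} [NormedAddCommGroup E] [InnerProductSpace ℝ E]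
    {β : ℝ} (hβ : 0 < β) (m a : E) :
    0 ≤ β * ‖a‖ ^ 2 + ⟪m, a⟫_ℝ + ‖m‖ ^ 2 / (4 * β) := by
  have hcs : -(‖m‖ * ‖a‖) ≤ ⟪m, a⟫_ℝ := neg_le_of_abs_le (abs_real_inner_le_norm m a)
  have hsq : β * ‖a‖ ^ 2 - ‖m‖ * ‖a‖ + ‖m‖ ^ 2 / (4 * β) = (2 * β * ‖a‖ - ‖m‖) ^ 2 / (4 * β) := by
    field_simp
    ring
  have : 0 ≤ (2 * β * ‖a‖ - ‖m‖) ^ 2 / (4 * β) := by positivity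
  linarith

section Cocoercive

variable {H₁ H₂ : Type*}
  [NormedAddCommGroup H₁] [InnerProductSpace ℝ H₁] [CompleteSpace H₁]
  [NormedAddCommGroup H₂] [InnerProductSpace ℝ H₂] [CompleteSpace H₂]

lemma inner_adjoint_sub_comp_cocoercive_add_nonneg {B : H₂ → H₂} {β : ℝ} (hβ : 0 < β)
    (hB : ∀ u v : H₂, β * ‖B u - B v‖ ^ 2 ≤ ⟪u - v, B u - B v⟫_ℝ)
    (K : H₁ →L[ℝ] H₂) (Q : H₂ →L[ℝ] H₁) (x y : H₁) :
    0 ≤ ⟪x - y, Q (B (K x)) - Q (B (K y))⟫_ℝ + ‖(adjoint Q - K) (x - y)‖ ^ 2 / (4 * β) := by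
  set d := x - y
  set a := B (K x) - B (K y)
  have hQ : ⟪d, Q (B (K x)) - Q (B (K y))⟫_ℝ = ⟪K d, a⟫_ℝ + ⟪(adjoint Q - K) d, a⟫_ℝ := by
    rw [← map_sub, ← adjoint_inner_left, ← inner_add_left, sub_apply, add_sub_cancel]
  have hKa : β * ‖a‖ ^ 2 ≤ ⟪K d, a⟫_ℝ := by
    simpa only [d, map_sub] using hB (K x) (K y)
  have := inner_add_norm_sq_div_nonneg hβ ((adjoint Q - K) d) a
  linarith

lemma inner_adjoint_comp_self_smul_apply (M : H₁ →L[ℝ] H₂) (c : ℝ) (d : H₁) :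
    ⟪d, adjoint M (c • M d)⟫_ℝ = c * ‖M d‖ ^ 2 := by
  rw [adjoint_inner_right, real_inner_smul_right, real_inner_self_eq_norm_sq]

end Cocoercive

theorem stmt_7 (H₁ H₂ : Type*)
    [NormedAddCommGroup H₁] [InnerProductSpace ℝ H₁] [CompleteSpace H₁]
    [NormedAddCommGroup H₂] [InnerProductSpace ℝ H₂] [CompleteSpace H₂]
    (B : H₂ → H₂) (β : ℝ) (hβ : 0 < β)
    (hcoco : ∀ u v : H₂, (inner ℝ (u - v) (B u - B v) : ℝ) ≥ β * ‖B u - B v‖ ^ 2)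
    (K : H₁ →L[ℝ] H₂) (Q : H₂ →L[ℝ] H₁)
    (U : H₁ → H₁)
    (hU : U = fun x => (ContinuousLinearMap.adjoint (ContinuousLinearMap.adjoint Q - K))
      ((1 / β) • ((ContinuousLinearMap.adjoint Q - K) x))) :
    ∀ x y : H₁,
      (0 : ℝ) ≤ inner ℝ (x - y)
        ((Q (B (K x)) + (1 / 4 : ℝ) • U x) - (Q (B (K y)) + (1 / 4 : ℝ) • U y)) := by
  intro x y
  set M := adjoint Q - K
  have hUdiff : (1 / 4 : ℝ) • U x - (1 / 4 : ℝ) • U y = adjoint M ((1 / (4 * β)) • M (x - y)) := by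
    rw [hU, ← smul_sub, ← map_sub, ← smul_sub, ← map_sub, ← map_smul, smul_smul, one_div_mul_one_div]
  have hUterm : ⟪x - y, (1 / 4 : ℝ) • U x - (1 / 4 : ℝ) • U y⟫_ℝ = ‖M (x - y)‖ ^ 2 / (4 * β) := by
    rw [hUdiff, inner_adjoint_comp_self_smul_apply]
    ring
  rw [add_sub_add_comm, inner_add_right, hUterm]
  exact inner_adjoint_sub_comp_cocoercive_add_nonneg hβ hcoco K Q x y
end
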